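/- arXiv:math/0511460 — 4 statements merged into one kernel-verified Lean document; each statement's English description precedes it below -/
import Mathlib

section
/- Let U be a strong USP of width k, let m ≥ 2, let H be the abelian group of functions from U × [k] to ℤ/mℤ, on which Sym(U) acts by (π·h)(u,i) = h(π⁻¹(u), i), and let G = H ⋊ Sym(U). For i ∈ {1,2,3}, let S_i consist of all products hπ with π ∈ Sym(U) and h ∈ H satisfying h(u,j) ≠ 0 iff u_j = i, for all u ∈ U and j ∈ [k]. Then S_1, S_2, S_3 satisfy the triple product property in G. -/
def rightQuotientSet {G : Type*} [Group G] (S : Set G) : Set G :=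
  {q | ∃ s₁ ∈ S, ∃ s₂ ∈ S, q = s₁ * s₂⁻¹}

def TripleProductProperty {G : Type*} [Group G] (S₁ S₂ S₃ : Set G) : Prop :=
  ∀ q₁ ∈ rightQuotientSet S₁, ∀ q₂ ∈ rightQuotientSet S₂, ∀ q₃ ∈ rightQuotientSet S₃,
    q₁ * q₂ * q₃ = 1 → q₁ = 1 ∧ q₂ = 1 ∧ q₃ = 1

/-- Exactly two of three propositions hold. -/
def ExactlyTwo (P Q R : Prop) : Prop :=
  (P ∧ Q ∧ ¬R) ∨ (P ∧ ¬Q ∧ R) ∨ (¬P ∧ Q ∧ R)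

/-- A strong USP (symbols `1,2,3` represented by `0,1,2 : Fin 3`). -/
def IsStrongUSP {k : ℕ} (U : Set (Fin k → Fin 3)) : Prop :=
  ∀ π₁ π₂ π₃ : Equiv.Perm U, (π₁ = π₂ ∧ π₂ = π₃) ∨
    ∃ u : U, ∃ i : Fin k,
      ExactlyTwo (((π₁ u : U) : Fin k → Fin 3) i = 0)
        (((π₂ u : U) : Fin k → Fin 3) i = 1)
        (((π₃ u : U) : Fin k → Fin 3) i = 2)

/-- The abelian group `H` of functions `U × [k] → ℤ/m`, written multiplicatively. -/
abbrev Hgrp {k : ℕ} (U : Set (Fin k → Fin 3)) (m : ℕ) : Type :=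
  (U × Fin k) → Multiplicative (ZMod m)

/-- The automorphism of `H` induced by a permutation `π` of `U`:
`(π · h)(u, i) = h(π⁻¹ u, i)`. -/
def permAut {k : ℕ} (U : Set (Fin k → Fin 3)) (m : ℕ) (π : Equiv.Perm U) :
    MulAut (Hgrp U m) where
  toFun h := fun p => h (π⁻¹ p.1, p.2)
  invFun h := fun p => h (π p.1, p.2)
  left_inv h := funext fun p => by simp
  right_inv h := funext fun p => by simp
  map_mul' h g := rfl

/-- The action of `Sym(U)` on `H`. -/
def permAction {k : ℕ} (U : Set (Fin k → Fin 3)) (m : ℕ) :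
    Equiv.Perm U →* MulAut (Hgrp U m) where
  toFun := permAut U m
  map_one' := by ext h p; simp [permAut]
  map_mul' π ρ := by ext h p; simp [permAut, mul_inv_rev]

/-- The group `G = H ⋊ Sym(U)`. -/
abbrev Ggrp {k : ℕ} (U : Set (Fin k → Fin 3)) (m : ℕ) : Type :=
  SemidirectProduct (Hgrp U m) (Equiv.Perm U) (permAction U m)

/-- `S_i` consists of all `h π` with `π ∈ Sym(U)` and `h(u,j) ≠ 0` iff `u_j = i`. -/
def Sset {k : ℕ} (U : Set (Fin k → Fin 3)) (m : ℕ) (i : Fin 3) : Set (Ggrp U m) :=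
  {g | ∀ (u : U) (j : Fin k), g.left (u, j) ≠ 1 ↔ ((u : Fin k → Fin 3) j = i)}

section Aux

variable {k : ℕ} {U : Set (Fin k → Fin 3)} {m : ℕ}

lemma Sset_triv {c : Fin 3} {f : Ggrp U m} (hf : f ∈ Sset U m c) (w : U) (j : Fin k)
    (hne : (w : Fin k → Fin 3) j ≠ c) : f.left (w, j) = 1 :=
  of_not_not (fun h => hne ((hf w j).mp h))

end Aux

theorem stmt_8 {k : ℕ} (U : Set (Fin k → Fin 3)) (m : ℕ) (hm : 2 ≤ m)
    (hU : IsStrongUSP U) :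
    TripleProductProperty (Sset U m 0) (Sset U m 1) (Sset U m 2) := by
  intro q₁ hq₁ q₂ hq₂ q₃ hq₃ hprod
  obtain ⟨s₁, hs₁, t₁, ht₁, rfl⟩ := hq₁
  obtain ⟨s₂, hs₂, t₂, ht₂, rfl⟩ := hq₂
  obtain ⟨s₃, hs₃, t₃, ht₃, rfl⟩ := hq₃
  set ρ₁ : Equiv.Perm U := s₁.right * t₁.right⁻¹ with hρ₁def
  set ρ₂ : Equiv.Perm U := s₂.right * t₂.right⁻¹ with hρ₂def
  set ρ₃ : Equiv.Perm U := s₃.right * t₃.right⁻¹ with hρ₃def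
  have hR : ρ₁ * ρ₂ * ρ₃ = 1 := congrArg SemidirectProduct.right hprod
  have hρ3ap : ∀ w : U, ρ₃⁻¹ (ρ₂⁻¹ (ρ₁⁻¹ w)) = w := by
    intro w
    have h1 : ρ₃⁻¹ * ρ₂⁻¹ * ρ₁⁻¹ = 1 := by
      rw [← mul_inv_rev, ← mul_inv_rev, ← mul_assoc, hR, inv_one]
    simpa [Equiv.Perm.mul_apply] using congrFun (congrArg (fun π : Equiv.Perm U => ⇑π) h1) w
  have key : ∀ (u : U) (j : Fin k),
      s₁.left (u, j) * (t₁.left (ρ₁⁻¹ u, j))⁻¹ *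
      (s₂.left (ρ₁⁻¹ u, j) * (t₂.left (ρ₂⁻¹ (ρ₁⁻¹ u), j))⁻¹) *
      (s₃.left (ρ₂⁻¹ (ρ₁⁻¹ u), j) * (t₃.left (u, j))⁻¹) = 1 := by
    intro u j
    have h0 :
        s₁.left (u, j) * (t₁.left (ρ₁⁻¹ u, j))⁻¹ *
        (s₂.left (ρ₁⁻¹ u, j) * (t₂.left (ρ₂⁻¹ (ρ₁⁻¹ u), j))⁻¹) *
        (s₃.left (ρ₂⁻¹ (ρ₁⁻¹ u), j) * (t₃.left (ρ₃⁻¹ (ρ₂⁻¹ (ρ₁⁻¹ u)), j))⁻¹) = 1 :=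
      congrFun (congrArg SemidirectProduct.left hprod) (u, j)
    rwa [hρ3ap u] at h0
  have h3 : ∀ x : Fin 3, x = 0 ∨ x = 1 ∨ x = 2 := by decide
  rcases hU (ρ₁ * ρ₂)⁻¹ 1 ρ₁⁻¹ with ⟨h12, h23⟩ | ⟨u, j, hex⟩
  · -- all permutations trivial
    have e1 : ρ₁ = 1 := by
      have h' := h23.symm
      rwa [inv_eq_one] at h'
    have e2 : ρ₂ = 1 := by
      rw [inv_eq_one, e1, one_mul] at h12
      exact h12
    have e3 : ρ₃ = 1 := by
      rw [e1, e2, one_mul, one_mul] at hR; exact hR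
    have keys : ∀ (u : U) (j : Fin k),
        s₁.left (u, j) * (t₁.left (u, j))⁻¹ *
        (s₂.left (u, j) * (t₂.left (u, j))⁻¹) *
        (s₃.left (u, j) * (t₃.left (u, j))⁻¹) = 1 := by
      intro u j
      have h' := key u j
      simpa [e1, e2] using h'
    have main : ∀ (u : U) (j : Fin k),
        s₁.left (u, j) = t₁.left (u, j) ∧ s₂.left (u, j) = t₂.left (u, j) ∧
        s₃.left (u, j) = t₃.left (u, j) := by
      intro u j
      have E := keys u j
      rcases h3 ((u : Fin k → Fin 3) j) with hv | hv | hv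
      · have c2 : s₂.left (u, j) = 1 := Sset_triv hs₂ u j (by rw [hv]; decide)
        have c2' : t₂.left (u, j) = 1 := Sset_triv ht₂ u j (by rw [hv]; decide)
        have c3 : s₃.left (u, j) = 1 := Sset_triv hs₃ u j (by rw [hv]; decide)
        have c3' : t₃.left (u, j) = 1 := Sset_triv ht₃ u j (by rw [hv]; decide)
        rw [c2, c2', c3, c3'] at E
        simp only [inv_one, mul_one, one_mul, mul_inv_eq_one] at E
        exact ⟨E, by rw [c2, c2'], by rw [c3, c3']⟩
      · have c1 : s₁.left (u, j) = 1 := Sset_triv hs₁ u j (by rw [hv]; decide)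
        have c1' : t₁.left (u, j) = 1 := Sset_triv ht₁ u j (by rw [hv]; decide)
        have c3 : s₃.left (u, j) = 1 := Sset_triv hs₃ u j (by rw [hv]; decide)
        have c3' : t₃.left (u, j) = 1 := Sset_triv ht₃ u j (by rw [hv]; decide)
        rw [c1, c1', c3, c3'] at E
        simp only [inv_one, mul_one, one_mul, mul_inv_eq_one] at E
        exact ⟨by rw [c1, c1'], E, by rw [c3, c3']⟩
      · have c1 : s₁.left (u, j) = 1 := Sset_triv hs₁ u j (by rw [hv]; decide)
        have c1' : t₁.left (u, j) = 1 := Sset_triv ht₁ u j (by rw [hv]; decide)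
        have c2 : s₂.left (u, j) = 1 := Sset_triv hs₂ u j (by rw [hv]; decide)
        have c2' : t₂.left (u, j) = 1 := Sset_triv ht₂ u j (by rw [hv]; decide)
        rw [c1, c1', c2, c2'] at E
        simp only [inv_one, mul_one, one_mul, mul_inv_eq_one] at E
        exact ⟨by rw [c1, c1'], by rw [c2, c2'], E⟩
    have rs1 : s₁.right = t₁.right := by
      rw [← mul_inv_eq_one, ← hρ₁def]; exact e1
    have rs2 : s₂.right = t₂.right := by
      rw [← mul_inv_eq_one, ← hρ₂def]; exact e2
    have rs3 : s₃.right = t₃.right := by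
      rw [← mul_inv_eq_one, ← hρ₃def]; exact e3
    have eq1 : s₁ = t₁ := by
      ext p
      · obtain ⟨u, j⟩ := p; exact (main u j).1
      · rw [rs1]
    have eq2 : s₂ = t₂ := by
      ext p
      · obtain ⟨u, j⟩ := p; exact (main u j).2.1
      · rw [rs2]
    have eq3 : s₃ = t₃ := by
      ext p
      · obtain ⟨u, j⟩ := p; exact (main u j).2.2
      · rw [rs3]
    exact ⟨by rw [eq1, mul_inv_cancel], by rw [eq2, mul_inv_cancel], by rw [eq3, mul_inv_cancel]⟩
  · -- exactly two: derive contradiction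
    exfalso
    have hv3 : ((ρ₁ * ρ₂)⁻¹ u : U) = ρ₂⁻¹ (ρ₁⁻¹ u) := rfl
    have hv1 : ((1 : Equiv.Perm U) u : U) = u := rfl
    rw [hv3, hv1] at hex
    have E := key u j
    rcases hex with ⟨h1, h2, h3'⟩ | ⟨h1, h2, h3'⟩ | ⟨h1, h2, h3'⟩
    · -- v₃ j = 0, u j = 1, v₂ j ≠ 2
      have cA : s₁.left (u, j) = 1 := Sset_triv hs₁ u j (by rw [h2]; decide)
      have cF : t₃.left (u, j) = 1 := Sset_triv ht₃ u j (by rw [h2]; decide)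
      have cD : t₂.left (ρ₂⁻¹ (ρ₁⁻¹ u), j) = 1 := Sset_triv ht₂ _ j (by rw [h1]; decide)
      have cE : s₃.left (ρ₂⁻¹ (ρ₁⁻¹ u), j) = 1 := Sset_triv hs₃ _ j (by rw [h1]; decide)
      rw [cA, cF, cD, cE] at E
      simp only [inv_one, mul_one, one_mul, inv_mul_eq_one, mul_inv_eq_one] at E
      rcases h3 (((ρ₁⁻¹ u : U) : Fin k → Fin 3) j) with hv | hv | hv
      · have hX : t₁.left (ρ₁⁻¹ u, j) ≠ 1 := (ht₁ _ j).mpr hv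
        have hY : s₂.left (ρ₁⁻¹ u, j) = 1 := Sset_triv hs₂ _ j (by rw [hv]; decide)
        first
          | exact hX (E.trans hY)
          | exact hX (E.symm.trans hY)
      · have hX : s₂.left (ρ₁⁻¹ u, j) ≠ 1 := (hs₂ _ j).mpr hv
        have hY : t₁.left (ρ₁⁻¹ u, j) = 1 := Sset_triv ht₁ _ j (by rw [hv]; decide)
        first
          | exact hX (E.trans hY)
          | exact hX (E.symm.trans hY)
      · exact h3' hv
    · -- v₃ j = 0, u j ≠ 1, v₂ j = 2
      have cB : t₁.left (ρ₁⁻¹ u, j) = 1 := Sset_triv ht₁ _ j (by rw [h3']; decide)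
      have cC : s₂.left (ρ₁⁻¹ u, j) = 1 := Sset_triv hs₂ _ j (by rw [h3']; decide)
      have cD : t₂.left (ρ₂⁻¹ (ρ₁⁻¹ u), j) = 1 := Sset_triv ht₂ _ j (by rw [h1]; decide)
      have cE : s₃.left (ρ₂⁻¹ (ρ₁⁻¹ u), j) = 1 := Sset_triv hs₃ _ j (by rw [h1]; decide)
      rw [cB, cC, cD, cE] at E
      simp only [inv_one, mul_one, one_mul, inv_mul_eq_one, mul_inv_eq_one] at E
      rcases h3 ((u : Fin k → Fin 3) j) with hv | hv | hv
      · have hX : s₁.left (u, j) ≠ 1 := (hs₁ _ j).mpr hv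
        have hY : t₃.left (u, j) = 1 := Sset_triv ht₃ _ j (by rw [hv]; decide)
        first
          | exact hX (E.trans hY)
          | exact hX (E.symm.trans hY)
      · exact h2 hv
      · have hX : t₃.left (u, j) ≠ 1 := (ht₃ _ j).mpr hv
        have hY : s₁.left (u, j) = 1 := Sset_triv hs₁ _ j (by rw [hv]; decide)
        first
          | exact hX (E.trans hY)
          | exact hX (E.symm.trans hY)
    · -- v₃ j ≠ 0, u j = 1, v₂ j = 2
      have cA : s₁.left (u, j) = 1 := Sset_triv hs₁ u j (by rw [h2]; decide)
      have cF : t₃.left (u, j) = 1 := Sset_triv ht₃ u j (by rw [h2]; decide)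
      have cB : t₁.left (ρ₁⁻¹ u, j) = 1 := Sset_triv ht₁ _ j (by rw [h3']; decide)
      have cC : s₂.left (ρ₁⁻¹ u, j) = 1 := Sset_triv hs₂ _ j (by rw [h3']; decide)
      rw [cA, cF, cB, cC] at E
      simp only [inv_one, mul_one, one_mul, inv_mul_eq_one, mul_inv_eq_one] at E
      rcases h3 (((ρ₂⁻¹ (ρ₁⁻¹ u) : U) : Fin k → Fin 3) j) with hv | hv | hv
      · exact h1 hv
      · have hX : t₂.left (ρ₂⁻¹ (ρ₁⁻¹ u), j) ≠ 1 := (ht₂ _ j).mpr hv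
        have hY : s₃.left (ρ₂⁻¹ (ρ₁⁻¹ u), j) = 1 := Sset_triv hs₃ _ j (by rw [hv]; decide)
        first
          | exact hX (E.trans hY)
          | exact hX (E.symm.trans hY)
      · have hX : s₃.left (ρ₂⁻¹ (ρ₁⁻¹ u), j) ≠ 1 := (hs₃ _ j).mpr hv
        have hY : t₂.left (ρ₂⁻¹ (ρ₁⁻¹ u), j) = 1 := Sset_triv ht₂ _ j (by rw [hv]; decide)
        first
          | exact hX (E.trans hY)
          | exact hX (E.symm.trans hY)
end

section
/- Fix m ≥ 2 and ℓ ≥ 1. In H = (ℤ/mℤ)^{2ℓ}, for each subset S of [2ℓ] with |S| = ℓ, let A_S be the set of elements nonzero exactly in the coordinates of S, and let B_S = A_{S̄} where S̄ is the complement of S. Then these (2ℓ choose ℓ) pairs A_S, B_S satisfy the simultaneous double product property. -/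
/-- The simultaneous double product property for a family of pairs of subsets of
an additive abelian group. -/
def SimultaneousDPP {H : Type*} [AddCommGroup H] {ι : Type*} (A B : ι → Set H) : Prop :=
  (∀ i, ∀ a ∈ A i, ∀ a' ∈ A i, ∀ b ∈ B i, ∀ b' ∈ B i,
    a - a' + (b - b') = 0 → a = a' ∧ b = b') ∧
  ∀ i j k : ι, ∀ a ∈ A i, ∀ a' ∈ A j, ∀ b ∈ B j, ∀ b' ∈ B k,
    a - a' + b - b' = 0 → i = k

/-- The elements of `(ℤ/m)^{2ℓ}` that are nonzero exactly in the coordinates of `S`. -/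
def Aset (m ℓ : ℕ) (S : Finset (Fin (2 * ℓ))) : Set (Fin (2 * ℓ) → ZMod m) :=
  {x | ∀ i, x i ≠ 0 ↔ i ∈ S}

theorem stmt_13 (m ℓ : ℕ) (hm : 2 ≤ m) (hℓ : 1 ≤ ℓ) :
    SimultaneousDPP
      (fun S : {S : Finset (Fin (2 * ℓ)) // S.card = ℓ} => Aset m ℓ S.1)
      (fun S : {S : Finset (Fin (2 * ℓ)) // S.card = ℓ} => Aset m ℓ S.1ᶜ) := by
  constructor
  · rintro ⟨S, hS⟩ a ha a' ha' b hb b' hb' h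
    have key : ∀ t, a t = a' t ∧ b t = b' t := by
      intro t
      have ht : a t - a' t + (b t - b' t) = 0 := by
        have := congrFun h t
        simpa using this
      by_cases hts : t ∈ S
      · have hb0 : b t = 0 := by
          by_contra h0
          exact (Finset.mem_compl.mp ((hb t).mp h0)) hts
        have hb0' : b' t = 0 := by
          by_contra h0
          exact (Finset.mem_compl.mp ((hb' t).mp h0)) hts
        rw [hb0, hb0'] at ht
        constructor
        · have : a t - a' t = 0 := by simpa using ht
          exact sub_eq_zero.mp this
        · rw [hb0, hb0']
      · have ha0 : a t = 0 := by
          by_contra h0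
          exact hts ((ha t).mp h0)
        have ha0' : a' t = 0 := by
          by_contra h0
          exact hts ((ha' t).mp h0)
        rw [ha0, ha0'] at ht
        refine ⟨by rw [ha0, ha0'], ?_⟩
        have : b t - b' t = 0 := by simpa using ht
        exact sub_eq_zero.mp this
    exact ⟨funext fun t => (key t).1, funext fun t => (key t).2⟩
  · rintro ⟨i, hi⟩ ⟨j, hj⟩ ⟨k, hk⟩ a ha a' ha' b hb b' hb' h
    have hsub : k ⊆ i := by
      intro t htk
      by_contra hti
      have ha0 : a t = 0 := by
        by_contra h0
        exact hti ((ha t).mp h0)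
      have hb0' : b' t = 0 := by
        by_contra h0
        exact (Finset.mem_compl.mp ((hb' t).mp h0)) htk
      have ht : a t - a' t + b t - b' t = 0 := by
        have := congrFun h t
        simpa using this
      rw [ha0, hb0'] at ht
      have heq : b t = a' t := by
        have : -a' t + b t = 0 := by simpa using ht
        linear_combination this
      by_cases htj : t ∈ j
      · have : b t = 0 := by
          by_contra h0
          exact (Finset.mem_compl.mp ((hb t).mp h0)) htj
        exact (ha' t).mpr htj (by rw [← heq, this])
      · have : a' t = 0 := by
          by_contra h0
          exact htj ((ha' t).mp h0)
        exact (hb t).mpr (Finset.mem_compl.mpr htj) (by rw [heq, this])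
    exact Subtype.ext (Finset.eq_of_subset_of_card_le hsub (by rw [hi, hk])).symm
end

section
/- If n triples of subsets A_i, B_i, C_i ⊆ H satisfy the simultaneous triple product property and n' triples A_j', B_j', C_j' ⊆ H' satisfy the simultaneous triple product property, then the nn' triples A_i × A_j', B_i × B_j', C_i × C_j' ⊆ H × H' satisfy the simultaneous triple product property. -/
/-- The simultaneous triple product property for a family of triples of subsets
of a group. -/
def SimultaneousTPP {G : Type*} [Group G] {ι : Type*} (A B C : ι → Set G) : Prop :=
  (∀ i, TripleProductProperty (A i) (B i) (C i)) ∧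
  ∀ i j k : ι, ∀ a ∈ A i, ∀ a' ∈ A j, ∀ b ∈ B j, ∀ b' ∈ B k, ∀ c ∈ C k, ∀ c' ∈ C i,
    a * a'⁻¹ * b * b'⁻¹ * c * c'⁻¹ = 1 → i = j ∧ j = k

theorem stmt_16 {H H' : Type*} [Group H] [Group H'] {ι ι' : Type*}
    (A B C : ι → Set H) (A' B' C' : ι' → Set H')
    (h : SimultaneousTPP A B C) (h' : SimultaneousTPP A' B' C') :
    SimultaneousTPP (fun p : ι × ι' => A p.1 ×ˢ A' p.2)
      (fun p : ι × ι' => B p.1 ×ˢ B' p.2)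
      (fun p : ι × ι' => C p.1 ×ˢ C' p.2) := by
  constructor
  · rintro ⟨i, i'⟩ q₁ ⟨⟨s₁,t₁⟩, ⟨hs₁,ht₁⟩, ⟨s₂,t₂⟩, ⟨hs₂,ht₂⟩, rfl⟩
      q₂ ⟨⟨u₁,v₁⟩, ⟨hu₁,hv₁⟩, ⟨u₂,v₂⟩, ⟨hu₂,hv₂⟩, rfl⟩
      q₃ ⟨⟨w₁,x₁⟩, ⟨hw₁,hx₁⟩, ⟨w₂,x₂⟩, ⟨hw₂,hx₂⟩, rfl⟩ heq
    have h1 := congrArg Prod.fst heq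
    have h2 := congrArg Prod.snd heq
    simp only [Prod.fst_mul, Prod.snd_mul, Prod.fst_inv, Prod.snd_inv, Prod.fst_one, Prod.snd_one] at h1 h2 ⊢
    obtain ⟨e1, e2, e3⟩ := h.1 i _ ⟨s₁, hs₁, s₂, hs₂, rfl⟩ _ ⟨u₁, hu₁, u₂, hu₂, rfl⟩
      _ ⟨w₁, hw₁, w₂, hw₂, rfl⟩ h1
    obtain ⟨f1, f2, f3⟩ := h'.1 i' _ ⟨t₁, ht₁, t₂, ht₂, rfl⟩ _ ⟨v₁, hv₁, v₂, hv₂, rfl⟩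
      _ ⟨x₁, hx₁, x₂, hx₂, rfl⟩ h2
    refine ⟨Prod.ext e1 f1, Prod.ext e2 f2, Prod.ext e3 f3⟩
  · rintro ⟨i, i'⟩ ⟨j, j'⟩ ⟨k, k'⟩ ⟨a,a₂⟩ ⟨ha,ha₂⟩ ⟨a',a₂'⟩ ⟨ha',ha₂'⟩ ⟨b,b₂⟩ ⟨hb,hb₂⟩
      ⟨b',b₂'⟩ ⟨hb',hb₂'⟩ ⟨c,c₂⟩ ⟨hc,hc₂⟩ ⟨c',c₂'⟩ ⟨hc',hc₂'⟩ heq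
    have h1 := congrArg Prod.fst heq
    have h2 := congrArg Prod.snd heq
    simp only [Prod.fst_mul, Prod.snd_mul, Prod.fst_inv, Prod.snd_inv, Prod.fst_one, Prod.snd_one] at h1 h2
    obtain ⟨e1, e2⟩ := h.2 i j k a ha a' ha' b hb b' hb' c hc c' hc' h1
    obtain ⟨f1, f2⟩ := h'.2 i' j' k' a₂ ha₂ a₂' ha₂' b₂ hb₂ b₂' hb₂' c₂ hc₂ c₂' hc₂' h2
    exact ⟨Prod.ext e1 f1, Prod.ext e2 f2⟩
end

section
/- Let U be a strong USP of width k with a fixed ordering u_1, ..., u_{|U|} of its elements. For each π ∈ Sym(U), let U_π ∈ {1,2,3}^{|U|k} be the concatenation of π(u_1), ..., π(u_{|U|}). Then {U_π : π ∈ Sym(U)} is a local strong USP of size |U|! and width |U|·k. -/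
/-- The allowed triples of symbols for a local strong USP; with symbols `1,2,3`
represented by `0,1,2`, these are `(1,2,1),(1,2,2),(1,1,3),(1,3,3),(2,2,3),(3,2,3)`. -/
def allowedTriples : Set (Fin 3 × Fin 3 × Fin 3) :=
  {(0,1,0), (0,1,1), (0,0,2), (0,2,2), (1,1,2), (2,1,2)}

/-- A local strong USP of width `w`. -/
def IsLocalStrongUSP {w : ℕ} (V : Set (Fin w → Fin 3)) : Prop :=
  ∀ u ∈ V, ∀ v ∈ V, ∀ w' ∈ V, ¬(u = v ∧ v = w') →
    ∃ i : Fin w, (u i, v i, w' i) ∈ allowedTriples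

/-- The concatenation `U_π` of `π(u_1), …, π(u_{|U|})`, where `u_a` is the `a`-th
element of `U` in the fixed ordering `e`: the entry at position `a·k + i` is
`(π(u_a))_i`. -/
def concatRow {k : ℕ} (U : Finset (Fin k → Fin 3)) (e : Fin U.card ≃ {x // x ∈ U})
    (π : Equiv.Perm {x // x ∈ U}) : Fin (U.card * k) → Fin 3 :=
  fun j => ((π (e j.divNat) : {x // x ∈ U}) : Fin k → Fin 3) j.modNat

lemma divNat_prod {m n : ℕ} (a : Fin m) (i : Fin n) :
    (finProdFinEquiv (a, i)).divNat = a ∧ (finProdFinEquiv (a, i)).modNat = i := by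
  have h := finProdFinEquiv.symm_apply_apply (a, i)
  rw [finProdFinEquiv_symm_apply, Prod.mk.injEq] at h
  exact h

lemma key_triple (x y z : Fin 3) (h : ExactlyTwo (x = 0) (y = 1) (z = 2)) :
    (x, y, z) ∈ allowedTriples := by
  simp only [allowedTriples, Set.mem_insert_iff, Set.mem_singleton_iff]
  revert h; simp only [ExactlyTwo]; revert x y z; decide

lemma concat_inj {k : ℕ} (U : Finset (Fin k → Fin 3)) (e : Fin U.card ≃ {x // x ∈ U}) :
    Function.Injective (concatRow U e) := by
  intro π π' h
  apply Equiv.ext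
  intro x
  apply Subtype.ext
  funext i
  have hj := congrFun h (finProdFinEquiv (e.symm x, i))
  simpa [concatRow, (divNat_prod (e.symm x) i).1, (divNat_prod (e.symm x) i).2] using hj

theorem stmt_19 {k : ℕ} (U : Finset (Fin k → Fin 3))
    (e : Fin U.card ≃ {x // x ∈ U})
    (hU : IsStrongUSP (U : Set (Fin k → Fin 3))) :
    IsLocalStrongUSP (Set.range (concatRow U e)) ∧
      (Set.range (concatRow U e)).ncard = Nat.factorial U.card := by
  constructor
  · rintro _ ⟨π₁, rfl⟩ _ ⟨π₂, rfl⟩ _ ⟨π₃, rfl⟩ hne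
    rcases hU π₁ π₂ π₃ with ⟨h12, h23⟩ | ⟨u, i, hex⟩
    · exact absurd ⟨by rw [h12], by rw [h23]⟩ hne
    · refine ⟨finProdFinEquiv (e.symm u, i), ?_⟩
      have hd := (divNat_prod (e.symm u) i).1
      have hm := (divNat_prod (e.symm u) i).2
      simp only [concatRow, hd, hm, e.apply_symm_apply]
      exact key_triple _ _ _ hex
  · rw [Set.ncard_eq_toFinset_card']
    rw [Set.toFinset_range]
    rw [Finset.card_image_of_injective _ (concat_inj U e)]
    simp [Fintype.card_perm]
end
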